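/- For every integer n ≥ 4, the Dirichlet energy ∫_{ℝ^{n+1}_+} |∇W_{1,0}(x)|² dx is finite and positive, the weighted energy ∫_{ℝ^{n+1}_+} x_{n+1}² |∇W_{1,0}(x)|² dx is finite, and ∫_{ℝ^{n+1}_+} x_{n+1}² |∇W_{1,0}(x)|² dx = (2/((n−2)(n−3))) · ∫_{ℝ^{n+1}_+} |∇W_{1,0}(x)|² dx. (This is the case γ = 1/2 of the weighted-energy ratio ∫ x_N^{3−2γ}|∇W_{1,0}|² / ∫ x_N^{1−2γ}|∇W_{1,0}|² = 8(n−1)(1−γ)γ/((n−2)(n−2+2γ)(n−2−2γ)) entering the explicit value of the constant c¹_{n,γ}.) -/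

import Mathlib

open MeasureTheory Real Set

noncomputable section

/-- The standard bubble `W_{1,0}` for `γ = 1/2`, with `α_{n,1/2} = (n-1)^{(n-1)/2}`. -/
def bubbleW (n : ℕ) (x : Fin (n + 1) → ℝ) : ℝ :=
  ((n : ℝ) - 1) ^ (((n : ℝ) - 1) / 2) *
    ((1 + x (Fin.last n)) ^ 2 + ∑ i : Fin n, (x (Fin.castSucc i)) ^ 2) ^
      (-(((n : ℝ) - 1) / 2))

/-- The open upper half-space `ℝ^{n+1}_+`. -/
def upperHalf (n : ℕ) : Set (Fin (n + 1) → ℝ) := {x | 0 < x (Fin.last n)}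

/-- Squared length of the full Euclidean gradient. -/
def gradSq (n : ℕ) (f : (Fin (n + 1) → ℝ) → ℝ) (x : Fin (n + 1) → ℝ) : ℝ :=
  ∑ a : Fin (n + 1), (fderiv ℝ f x (Pi.single a 1)) ^ 2

/-!
With `g(x) = (1 + x_{n+1})² + |x̄|²`, a direct computation gives `|∇W_{1,0}|² = c_n g^{-n}`.
For fixed height `t = x_{n+1}`, the substitution `x̄ = (1 + t) y` gives
`∫_{ℝⁿ} ((1 + t)² + |x̄|²)^{-n} dx̄ = (1 + t)^{-n} ∫_{ℝⁿ} (1 + |y|²)^{-n} dy`,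
so by Fubini both energies reduce to `∫₀^∞ (1 + t)^{-n} dt = 1/(n-1)` and
`∫₀^∞ t² (1 + t)^{-n} dt = 2/((n-1)(n-2)(n-3))`, the latter by expanding
`t² = ((1 + t) - 1)²`.
-/

open Filter Topology

def bubbleDenom (n : ℕ) (x : Fin (n + 1) → ℝ) : ℝ :=
  (1 + x (Fin.last n)) ^ 2 + ∑ i : Fin n, (x (Fin.castSucc i)) ^ 2

def bubblePole (n : ℕ) : Fin (n + 1) → ℝ := Pi.single (Fin.last n) (-1)

lemma bubbleDenom_eq_sum (n : ℕ) (x : Fin (n + 1) → ℝ) :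
    bubbleDenom n x = ∑ a, (x a - bubblePole n a) ^ 2 := by
  simp [bubbleDenom, bubblePole, Fin.sum_univ_castSucc, Pi.single_apply, Fin.castSucc_ne_last,
    add_comm]

lemma bubbleDenom_pos {n : ℕ} {x : Fin (n + 1) → ℝ} (hx : 0 < 1 + x (Fin.last n)) :
    0 < bubbleDenom n x := by
  unfold bubbleDenom
  have := Finset.sum_nonneg fun i (_ : i ∈ Finset.univ) => sq_nonneg (x (Fin.castSucc i))
  positivity

lemma hasFDerivAt_bubbleDenom (n : ℕ) (x : Fin (n + 1) → ℝ) :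
    HasFDerivAt (bubbleDenom n)
      (∑ a, (2 * (x a - bubblePole n a)) •
        (ContinuousLinearMap.proj a : (Fin (n + 1) → ℝ) →L[ℝ] ℝ)) x := by
  rw [show bubbleDenom n = _ from funext (bubbleDenom_eq_sum n)]
  refine HasFDerivAt.fun_sum fun a _ => ?_
  refine (((hasFDerivAt_apply (𝕜 := ℝ) a x).sub_const (bubblePole n a)).pow 2).congr_fderiv ?_
  rw [nsmul_eq_mul, pow_one, Nat.cast_ofNat]

def bubbleGradConst (n : ℕ) : ℝ := ((n : ℝ) - 1) ^ (((n : ℝ) - 1) / 2) * ((n : ℝ) - 1)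

lemma gradSq_bubbleW {n : ℕ} {x : Fin (n + 1) → ℝ} (hx : 0 < bubbleDenom n x) :
    gradSq n (bubbleW n) x = bubbleGradConst n ^ 2 * (bubbleDenom n x ^ n)⁻¹ := by
  set p : ℝ := ((n : ℝ) - 1) / 2
  set c : ℝ := ((n : ℝ) - 1) ^ p
  set g := bubbleDenom n x
  have hW : HasFDerivAt (bubbleW n) _ x :=
    ((hasFDerivAt_bubbleDenom n x).rpow_const (p := -p) (Or.inl hx.ne')).const_mul c
  have hpow : (g ^ (-p - 1)) ^ 2 * g = (g ^ n)⁻¹ := by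
    rw [← rpow_natCast, ← rpow_natCast, ← rpow_mul hx.le, ← rpow_add_one hx.ne',
      ← rpow_neg hx.le]
    congr 1
    push_cast
    ring
  unfold gradSq
  simp only [hW.fderiv, smul_smul, FunLike.coe_smul, Pi.smul_apply, FunLike.coe_sum,
    Finset.sum_apply, ContinuousLinearMap.proj_apply, smul_eq_mul, Pi.single_apply, mul_ite,
    mul_one, mul_zero,
    Finset.sum_ite_eq', Finset.mem_univ, if_true, mul_pow, ← Finset.mul_sum]
  rw [← bubbleDenom_eq_sum, bubbleGradConst, ← hpow]
  ring

lemma bubbleGradConst_pos {n : ℕ} (hn : 2 ≤ n) : 0 < bubbleGradConst n := by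
  have : (1 : ℝ) < n := by exact_mod_cast hn
  have : (0 : ℝ) < (n : ℝ) - 1 := by linarith
  unfold bubbleGradConst
  positivity

lemma gradSq_bubbleW_eqOn_upperHalf (n : ℕ) :
    EqOn (fun x => bubbleGradConst n ^ 2 * (bubbleDenom n x ^ n)⁻¹) (gradSq n (bubbleW n))
      (upperHalf n) :=
  fun x (hx : 0 < x (Fin.last n)) => (gradSq_bubbleW (bubbleDenom_pos (by linarith))).symm

lemma sq_mul_gradSq_bubbleW_eqOn_upperHalf (n : ℕ) :
    EqOn (fun x => bubbleGradConst n ^ 2 * x (Fin.last n) ^ 2 * (bubbleDenom n x ^ n)⁻¹)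
      (fun x => x (Fin.last n) ^ 2 * gradSq n (bubbleW n) x) (upperHalf n) := fun x hx => by
  dsimp only
  rw [← gradSq_bubbleW_eqOn_upperHalf n hx]
  ring

lemma hasDerivAt_neg_inv_one_add_pow (j : ℕ) {t : ℝ} (ht : 1 + t ≠ 0) :
    HasDerivAt (fun s : ℝ => -((j : ℝ) + 1)⁻¹ * ((1 + s) ^ (j + 1))⁻¹)
      ((1 + t) ^ (j + 2))⁻¹ t := by
  have := ((((hasDerivAt_id t).const_add 1).fun_pow (j + 1)).fun_inv (pow_ne_zero _ ht)).const_mul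
    (-((j : ℝ) + 1)⁻¹)
  refine this.congr_deriv ?_
  simp only [id]
  field_simp
  push_cast
  ring

lemma tendsto_inv_one_add_pow_atTop {k : ℕ} (hk : k ≠ 0) :
    Tendsto (fun t : ℝ => ((1 + t) ^ k)⁻¹) atTop (𝓝 0) :=
  ((tendsto_pow_atTop hk).comp
    (tendsto_atTop_add_const_left _ (1 : ℝ) tendsto_id)).inv_tendsto_atTop

lemma tendsto_neg_inv_one_add_pow_atTop (j : ℕ) :
    Tendsto (fun t : ℝ => -((j : ℝ) + 1)⁻¹ * ((1 + t) ^ (j + 1))⁻¹) atTop (𝓝 0) := by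
  simpa using (tendsto_inv_one_add_pow_atTop j.succ_ne_zero).const_mul (-((j : ℝ) + 1)⁻¹)

lemma integrableOn_inv_one_add_pow {k : ℕ} (hk : 2 ≤ k) :
    IntegrableOn (fun t : ℝ => ((1 + t) ^ k)⁻¹) (Ioi 0) := by
  obtain ⟨j, rfl⟩ : ∃ j, k = j + 2 := ⟨k - 2, by omega⟩
  exact integrableOn_Ioi_deriv_of_nonneg'
    (fun t ht => hasDerivAt_neg_inv_one_add_pow j (by linarith [mem_Ici.1 ht]))
    (fun t ht => by have : 0 < t := ht; positivity) (tendsto_neg_inv_one_add_pow_atTop j)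

lemma integral_inv_one_add_pow {k : ℕ} (hk : 2 ≤ k) :
    ∫ t in Ioi (0 : ℝ), ((1 + t) ^ k)⁻¹ = ((k : ℝ) - 1)⁻¹ := by
  obtain ⟨j, rfl⟩ : ∃ j, k = j + 2 := ⟨k - 2, by omega⟩
  rw [integral_Ioi_of_hasDerivAt_of_nonneg'
    (fun t ht => hasDerivAt_neg_inv_one_add_pow j (by linarith [mem_Ici.1 ht]))
    (fun t ht => by have : 0 < t := ht; positivity) (tendsto_neg_inv_one_add_pow_atTop j)]
  push_cast
  ring

lemma sq_mul_inv_one_add_pow (j : ℕ) {t : ℝ} (ht : 1 + t ≠ 0) :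
    t ^ 2 * ((1 + t) ^ (j + 2))⁻¹ =
      ((1 + t) ^ j)⁻¹ - 2 * ((1 + t) ^ (j + 1))⁻¹ + ((1 + t) ^ (j + 2))⁻¹ := by
  field_simp
  ring

lemma sq_mul_inv_one_add_pow_eqOn (j : ℕ) :
    EqOn (fun t : ℝ => t ^ 2 * ((1 + t) ^ (j + 2))⁻¹)
      (fun t => ((1 + t) ^ j)⁻¹ - 2 * ((1 + t) ^ (j + 1))⁻¹ + ((1 + t) ^ (j + 2))⁻¹)
      (Ioi 0) :=
  fun t ht => sq_mul_inv_one_add_pow j (by linarith [mem_Ioi.1 ht])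

lemma integrableOn_sq_mul_inv_one_add_pow {k : ℕ} (hk : 4 ≤ k) :
    IntegrableOn (fun t : ℝ => t ^ 2 * ((1 + t) ^ k)⁻¹) (Ioi 0) := by
  obtain ⟨j, rfl⟩ : ∃ j, k = j + 2 := ⟨k - 2, by omega⟩
  refine IntegrableOn.congr_fun ?_ (sq_mul_inv_one_add_pow_eqOn j).symm measurableSet_Ioi
  exact ((integrableOn_inv_one_add_pow (by omega)).sub
    ((integrableOn_inv_one_add_pow (by omega)).const_mul 2)).add
    (integrableOn_inv_one_add_pow (by omega))

lemma integral_sq_mul_inv_one_add_pow {k : ℕ} (hk : 4 ≤ k) :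
    ∫ t in Ioi (0 : ℝ), t ^ 2 * ((1 + t) ^ k)⁻¹ =
      2 / (((k : ℝ) - 1) * ((k : ℝ) - 2) * ((k : ℝ) - 3)) := by
  obtain ⟨j, rfl⟩ : ∃ j, k = j + 2 := ⟨k - 2, by omega⟩
  have h₀ := integrableOn_inv_one_add_pow (k := j) (by omega)
  have h₁ := integrableOn_inv_one_add_pow (k := j + 1) (by omega)
  have h₂ := integrableOn_inv_one_add_pow (k := j + 2) (by omega)
  rw [setIntegral_congr_fun measurableSet_Ioi (sq_mul_inv_one_add_pow_eqOn j),
    integral_add (h₀.fun_sub (h₁.const_mul 2)) h₂, integral_sub h₀ (h₁.const_mul 2),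
    integral_const_mul, integral_inv_one_add_pow (by omega), integral_inv_one_add_pow (by omega),
    integral_inv_one_add_pow (by omega)]
  have : (4 : ℝ) ≤ j + 2 := by exact_mod_cast hk
  have h₃ : (j : ℝ) - 1 ≠ 0 := by linarith
  have h₄ : (j : ℝ) ≠ 0 := by linarith
  have h₅ : (j : ℝ) + 1 ≠ 0 := by linarith
  push_cast
  rw [show (j : ℝ) + 1 - 1 = j by ring, show (j : ℝ) + 2 - 1 = j + 1 by ring,
    show (j : ℝ) + 2 - 2 = j by ring, show (j : ℝ) + 2 - 3 = j - 1 by ring]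
  field_simp
  ring

lemma integrable_inv_one_add_sumSq_pow {d k : ℕ} (h : d < 2 * k) :
    Integrable (fun y : Fin d → ℝ => ((1 + ∑ i, y i ^ 2) ^ k)⁻¹) := by
  have hE : Integrable
      (fun z : EuclideanSpace ℝ (Fin d) => (1 + ‖z‖ ^ 2) ^ (-(2 * k : ℝ) / 2)) :=
    integrable_rpow_neg_one_add_norm_sq (by simpa using (by exact_mod_cast h : (d : ℝ) < 2 * k))
  have := ((PiLp.volume_preserving_toLp (Fin d)).integrable_comp
    hE.aestronglyMeasurable).2 hE
  refine this.congr (ae_of_all _ fun y => ?_)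
  have : 0 ≤ ∑ i, y i ^ 2 := Finset.sum_nonneg fun i _ => sq_nonneg (y i)
  simp only [Function.comp_apply, EuclideanSpace.real_norm_sq_eq]
  rw [show -(2 * k : ℝ) / 2 = -(k : ℝ) by ring, rpow_neg (by positivity), rpow_natCast]

lemma integral_inv_one_add_sumSq_pow_pos {d k : ℕ} (h : d < 2 * k) :
    0 < ∫ y : Fin d → ℝ, ((1 + ∑ i, y i ^ 2) ^ k)⁻¹ := by
  have hpos : ∀ y : Fin d → ℝ, 0 < ((1 + ∑ i, y i ^ 2) ^ k)⁻¹ := fun y => by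
    have : 0 ≤ ∑ i, y i ^ 2 := Finset.sum_nonneg fun i _ => sq_nonneg (y i)
    positivity
  rw [integral_pos_iff_support_of_nonneg (fun y => (hpos y).le)
    (integrable_inv_one_add_sumSq_pow h), Function.support_eq_univ fun y => (hpos y).ne']
  exact isOpen_univ.measure_pos volume univ_nonempty

lemma inv_sq_add_sumSq_pow_eq {d : ℕ} (k : ℕ) {a : ℝ} (ha : a ≠ 0) (y : Fin d → ℝ) :
    ((a ^ 2 + ∑ i, y i ^ 2) ^ k)⁻¹ =
      (a ^ (2 * k))⁻¹ * ((1 + ∑ i, (a⁻¹ • y) i ^ 2) ^ k)⁻¹ := by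
  simp only [Pi.smul_apply, smul_eq_mul, mul_pow, ← Finset.mul_sum]
  rw [pow_mul, ← mul_inv, ← mul_pow]
  congr 2
  field_simp

lemma integrable_inv_sq_add_sumSq_pow {d k : ℕ} (h : d < 2 * k) {a : ℝ} (ha : a ≠ 0) :
    Integrable (fun y : Fin d → ℝ => ((a ^ 2 + ∑ i, y i ^ 2) ^ k)⁻¹) := by
  simp_rw [inv_sq_add_sumSq_pow_eq k ha]
  exact ((integrable_comp_smul_iff volume (fun y : Fin d → ℝ => ((1 + ∑ i, y i ^ 2) ^ k)⁻¹)
    (inv_ne_zero ha)).2 (integrable_inv_one_add_sumSq_pow h)).const_mul _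

lemma integral_inv_sq_add_sumSq_pow (d k : ℕ) {a : ℝ} (ha : 0 < a) :
    ∫ y : Fin d → ℝ, ((a ^ 2 + ∑ i, y i ^ 2) ^ k)⁻¹ =
      a ^ d / a ^ (2 * k) * ∫ y : Fin d → ℝ, ((1 + ∑ i, y i ^ 2) ^ k)⁻¹ := by
  simp_rw [inv_sq_add_sumSq_pow_eq k ha.ne']
  rw [integral_const_mul, Measure.integral_comp_smul volume
    (fun y : Fin d → ℝ => ((1 + ∑ i, y i ^ 2) ^ k)⁻¹), Module.finrank_fin_fun, smul_eq_mul,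
    inv_pow, inv_inv, abs_of_pos (pow_pos ha d)]
  ring

lemma measurableSet_upperHalf (n : ℕ) : MeasurableSet (upperHalf n) :=
  measurableSet_lt measurable_const (measurable_pi_apply _)

lemma piFinSuccAbove_last_apply (n : ℕ) (x : Fin (n + 1) → ℝ) :
    MeasurableEquiv.piFinSuccAbove (fun _ => ℝ) (Fin.last n) x =
      (x (Fin.last n), fun j => x (Fin.castSucc j)) := by
  simp [MeasurableEquiv.piFinSuccAbove]
  rfl

lemma upperHalf_eq_preimage (n : ℕ) :
    upperHalf n = MeasurableEquiv.piFinSuccAbove (fun _ => ℝ) (Fin.last n) ⁻¹'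
      (Ioi 0 ×ˢ univ) := by
  ext x
  simp [upperHalf]

lemma volume_restrict_Ioi_prod (n : ℕ) :
    (volume : Measure (ℝ × (Fin n → ℝ))).restrict (Ioi 0 ×ˢ univ) =
      (volume.restrict (Ioi 0)).prod volume := by
  rw [Measure.volume_eq_prod, ← Measure.prod_restrict, Measure.restrict_univ]

lemma integrableOn_upperHalf_iff {n : ℕ} (f : ℝ × (Fin n → ℝ) → ℝ) :
    IntegrableOn (fun x => f (x (Fin.last n), fun j => x (Fin.castSucc j))) (upperHalf n) ↔
      Integrable f ((volume.restrict (Ioi 0)).prod volume) := by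
  have he := volume_preserving_piFinSuccAbove (fun _ : Fin (n + 1) => ℝ) (Fin.last n)
  rw [upperHalf_eq_preimage, ← volume_restrict_Ioi_prod, ← IntegrableOn,
    ← he.integrableOn_comp_preimage (MeasurableEquiv.measurableEmbedding _)]
  simp only [Function.comp_def, piFinSuccAbove_last_apply]

lemma setIntegral_upperHalf {n : ℕ} (f : ℝ × (Fin n → ℝ) → ℝ) :
    ∫ x in upperHalf n, f (x (Fin.last n), fun j => x (Fin.castSucc j)) =
      ∫ q, f q ∂(volume.restrict (Ioi 0)).prod volume := by
  have he := volume_preserving_piFinSuccAbove (fun _ : Fin (n + 1) => ℝ) (Fin.last n)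
  rw [upperHalf_eq_preimage, ← volume_restrict_Ioi_prod,
    ← he.setIntegral_preimage_emb (MeasurableEquiv.measurableEmbedding _)]
  simp only [piFinSuccAbove_last_apply]

lemma integral_inv_one_add_sq_add_sumSq_pow (n : ℕ) {t : ℝ} (ht : 0 < 1 + t) :
    ∫ y : Fin n → ℝ, (((1 + t) ^ 2 + ∑ i, y i ^ 2) ^ n)⁻¹ =
      ((1 + t) ^ n)⁻¹ * ∫ y : Fin n → ℝ, ((1 + ∑ i, y i ^ 2) ^ n)⁻¹ := by
  rw [integral_inv_sq_add_sumSq_pow n n ht, two_mul, pow_add, div_mul_cancel_right₀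
    (pow_ne_zero _ ht.ne')]

section WeightedKernel

variable {n : ℕ} {w : ℝ → ℝ}

lemma integrable_weight_mul_inv_pow (hn : 1 ≤ n) (hw : Measurable w)
    (hw₀ : ∀ t ∈ Ioi 0, 0 ≤ w t)
    (hint : IntegrableOn (fun t => w t * ((1 + t) ^ n)⁻¹) (Ioi 0)) :
    Integrable
      (fun q : ℝ × (Fin n → ℝ) => w q.1 * (((1 + q.1) ^ 2 + ∑ i, q.2 i ^ 2) ^ n)⁻¹)
      ((volume.restrict (Ioi 0)).prod volume) := by
  have hmeas : Measurable
      fun q : ℝ × (Fin n → ℝ) => w q.1 * (((1 + q.1) ^ 2 + ∑ i, q.2 i ^ 2) ^ n)⁻¹ := by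
    fun_prop
  have hslice : ∀ t ∈ Ioi (0 : ℝ), Integrable
      (fun y : Fin n → ℝ => w t * (((1 + t) ^ 2 + ∑ i, y i ^ 2) ^ n)⁻¹) :=
    fun t ht => (integrable_inv_sq_add_sumSq_pow (by omega)
      (by linarith [mem_Ioi.1 ht] : 1 + t ≠ 0)).const_mul (w t)
  refine (integrable_prod_iff hmeas.aestronglyMeasurable).2
    ⟨(ae_restrict_iff' measurableSet_Ioi).2 (ae_of_all _ hslice), ?_⟩
  refine (hint.mul_const (∫ y : Fin n → ℝ, ((1 + ∑ i, y i ^ 2) ^ n)⁻¹)).congr ?_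
  filter_upwards [ae_restrict_mem measurableSet_Ioi] with t (ht : 0 < t)
  have hnn : ∀ y : Fin n → ℝ, 0 ≤ w t * (((1 + t) ^ 2 + ∑ i, y i ^ 2) ^ n)⁻¹ := by
    intro y
    have : 0 ≤ ∑ i, y i ^ 2 := Finset.sum_nonneg fun i _ => sq_nonneg (y i)
    have := hw₀ t ht
    positivity
  rw [integral_congr_ae (ae_of_all _ fun y => Real.norm_of_nonneg (hnn y)), integral_const_mul,
    integral_inv_one_add_sq_add_sumSq_pow n (by linarith)]
  ring

lemma integral_weight_mul_inv_pow (hn : 1 ≤ n) (hw : Measurable w)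
    (hw₀ : ∀ t ∈ Ioi 0, 0 ≤ w t)
    (hint : IntegrableOn (fun t => w t * ((1 + t) ^ n)⁻¹) (Ioi 0)) :
    ∫ q : ℝ × (Fin n → ℝ), w q.1 * (((1 + q.1) ^ 2 + ∑ i, q.2 i ^ 2) ^ n)⁻¹
        ∂(volume.restrict (Ioi 0)).prod volume =
      (∫ y : Fin n → ℝ, ((1 + ∑ i, y i ^ 2) ^ n)⁻¹) *
        ∫ t in Ioi (0 : ℝ), w t * ((1 + t) ^ n)⁻¹ := by
  rw [integral_prod _ (integrable_weight_mul_inv_pow hn hw hw₀ hint), ← integral_const_mul]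
  refine setIntegral_congr_fun measurableSet_Ioi fun t (ht : 0 < t) => ?_
  dsimp only
  rw [integral_const_mul, integral_inv_one_add_sq_add_sumSq_pow n (by linarith)]
  ring

lemma integrableOn_upperHalf_weight_mul_inv_pow (hn : 1 ≤ n) (hw : Measurable w)
    (hw₀ : ∀ t ∈ Ioi 0, 0 ≤ w t)
    (hint : IntegrableOn (fun t => w t * ((1 + t) ^ n)⁻¹) (Ioi 0)) :
    IntegrableOn (fun x => w (x (Fin.last n)) * (bubbleDenom n x ^ n)⁻¹) (upperHalf n) :=
  (integrableOn_upperHalf_iff _).2 (integrable_weight_mul_inv_pow hn hw hw₀ hint)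

lemma setIntegral_upperHalf_weight_mul_inv_pow (hn : 1 ≤ n) (hw : Measurable w)
    (hw₀ : ∀ t ∈ Ioi 0, 0 ≤ w t)
    (hint : IntegrableOn (fun t => w t * ((1 + t) ^ n)⁻¹) (Ioi 0)) :
    ∫ x in upperHalf n, w (x (Fin.last n)) * (bubbleDenom n x ^ n)⁻¹ =
      (∫ y : Fin n → ℝ, ((1 + ∑ i, y i ^ 2) ^ n)⁻¹) *
        ∫ t in Ioi (0 : ℝ), w t * ((1 + t) ^ n)⁻¹ :=
  (setIntegral_upperHalf _).trans (integral_weight_mul_inv_pow hn hw hw₀ hint)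

end WeightedKernel

section BubbleEnergy

variable {n : ℕ}

lemma integrableOn_gradSq_bubbleW (hn : 2 ≤ n) :
    IntegrableOn (gradSq n (bubbleW n)) (upperHalf n) :=
  (integrableOn_upperHalf_weight_mul_inv_pow (by omega) measurable_const
    (fun _ _ => sq_nonneg _) ((integrableOn_inv_one_add_pow hn).const_mul _)).congr_fun
    (gradSq_bubbleW_eqOn_upperHalf n) (measurableSet_upperHalf n)

lemma setIntegral_gradSq_bubbleW (hn : 2 ≤ n) :
    ∫ x in upperHalf n, gradSq n (bubbleW n) x =
      (∫ y : Fin n → ℝ, ((1 + ∑ i, y i ^ 2) ^ n)⁻¹) *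
        (bubbleGradConst n ^ 2 * ((n : ℝ) - 1)⁻¹) := by
  rw [← setIntegral_congr_fun (measurableSet_upperHalf n) (gradSq_bubbleW_eqOn_upperHalf n),
    setIntegral_upperHalf_weight_mul_inv_pow (by omega) measurable_const (fun _ _ => sq_nonneg _)
      ((integrableOn_inv_one_add_pow hn).const_mul _),
    integral_const_mul, integral_inv_one_add_pow hn]

lemma integrableOn_const_mul_sq_mul_inv_one_add_pow (c : ℝ) (hn : 4 ≤ n) :
    IntegrableOn (fun t : ℝ => c * t ^ 2 * ((1 + t) ^ n)⁻¹) (Ioi 0) := by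
  simpa only [IntegrableOn, mul_assoc] using (integrableOn_sq_mul_inv_one_add_pow hn).const_mul c

lemma integrableOn_sq_mul_gradSq_bubbleW (hn : 4 ≤ n) :
    IntegrableOn (fun x => x (Fin.last n) ^ 2 * gradSq n (bubbleW n) x) (upperHalf n) :=
  (integrableOn_upperHalf_weight_mul_inv_pow (by omega) (by fun_prop) (fun _ _ => by positivity)
    (integrableOn_const_mul_sq_mul_inv_one_add_pow _ hn)).congr_fun
    (sq_mul_gradSq_bubbleW_eqOn_upperHalf n) (measurableSet_upperHalf n)

lemma setIntegral_sq_mul_gradSq_bubbleW (hn : 4 ≤ n) :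
    ∫ x in upperHalf n, x (Fin.last n) ^ 2 * gradSq n (bubbleW n) x =
      (∫ y : Fin n → ℝ, ((1 + ∑ i, y i ^ 2) ^ n)⁻¹) *
        (bubbleGradConst n ^ 2 * (2 / (((n : ℝ) - 1) * ((n : ℝ) - 2) * ((n : ℝ) - 3)))) := by
  rw [← setIntegral_congr_fun (measurableSet_upperHalf n)
      (sq_mul_gradSq_bubbleW_eqOn_upperHalf n),
    setIntegral_upperHalf_weight_mul_inv_pow (by omega) (by fun_prop) (fun _ _ => by positivity)
      (integrableOn_const_mul_sq_mul_inv_one_add_pow _ hn)]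
  simp only [mul_assoc (bubbleGradConst n ^ 2)]
  rw [integral_const_mul, integral_sq_mul_inv_one_add_pow hn]

end BubbleEnergy

/-- For `n ≥ 4`, the Dirichlet energy of the bubble is finite and positive, the
`x_{n+1}²`-weighted energy is finite, and their ratio is `2/((n-2)(n-3))`
(the case `γ = 1/2` of the weighted-energy ratio entering `c¹_{n,γ}`). -/
theorem statement13 :
    ∀ n : ℕ, 4 ≤ n →
      IntegrableOn (fun x => gradSq n (bubbleW n) x) (upperHalf n) volume ∧
      0 < (∫ x in upperHalf n, gradSq n (bubbleW n) x) ∧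
      IntegrableOn (fun x => (x (Fin.last n)) ^ 2 * gradSq n (bubbleW n) x)
        (upperHalf n) volume ∧
      (∫ x in upperHalf n, (x (Fin.last n)) ^ 2 * gradSq n (bubbleW n) x) =
        (2 / (((n : ℝ) - 2) * ((n : ℝ) - 3))) * ∫ x in upperHalf n, gradSq n (bubbleW n) x := by
  intro n hn
  have hK := bubbleGradConst_pos (n := n) (by omega)
  have hC := integral_inv_one_add_sumSq_pow_pos (d := n) (k := n) (by omega)
  have h₄ : (4 : ℝ) ≤ n := by exact_mod_cast hn
  refine ⟨integrableOn_gradSq_bubbleW (by omega), ?_, integrableOn_sq_mul_gradSq_bubbleW hn, ?_⟩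
  · rw [setIntegral_gradSq_bubbleW (by omega)]
    have : 0 < (n : ℝ) - 1 := by linarith
    positivity
  · rw [setIntegral_gradSq_bubbleW (by omega), setIntegral_sq_mul_gradSq_bubbleW hn]
    have : (n : ℝ) - 1 ≠ 0 := by linarith
    have : (n : ℝ) - 2 ≠ 0 := by linarith
    have : (n : ℝ) - 3 ≠ 0 := by linarith
    field_simp
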